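/- Let D1, D2 be UFDs, p irreducible in D1 and q irreducible in D2, and s, t ≥ 2. If s ≠ t, then there is no bijection between the sets of annihilator classes of nonzero zero-divisors of D1/⟨p^s⟩ and D2/⟨q^t⟩ (the compressed zero-divisor graphs are not isomorphic). -/

import Mathlib

/-!
Every nonzero element of `D ⧸ (p ^ s)` is the class of `p ^ v * c` with `p ∤ c` and `v < s`.
Since `p ∤ c`, multiplication by `c` does not change the annihilator, which is therefore that of
`p ^ v`, namely the ideal generated by `p ^ (s - v)`. These ideals are distinct for distinct `v`,
and the element is a zero-divisor exactly when `0 < v`, so there are exactly `s - 1` annihilator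
classes; `s - 1 = t - 1` then forces `s = t`.
-/

def annihilatorClasses (R : Type*) [MulZeroClass R] : Set (Set R) :=
  {S | ∃ x : R, x ≠ 0 ∧ (∃ w : R, w ≠ 0 ∧ x * w = 0) ∧ S = {y | x * y = 0}}

namespace PrimePowerQuotient

def powAnnihilator {D : Type*} [CommRing D] (p : D) (s k : ℕ) : Set (D ⧸ Ideal.span {p ^ s}) :=
  {y | Ideal.Quotient.mk _ (p ^ k) * y = 0}

variable {D : Type*} [CommRing D] [IsDomain D] {p : D} (s : ℕ)

theorem mk_pow_mul_mul_mk_eq_zero_iff (hp : Prime p) {v : ℕ} (hv : v ≤ s) {c : D}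
    (hc : ¬p ∣ c) (b : D) :
    Ideal.Quotient.mk (Ideal.span {p ^ s}) (p ^ v * c) * Ideal.Quotient.mk _ b = 0 ↔
      p ^ (s - v) ∣ b := by
  rw [← map_mul, Ideal.Quotient.eq_zero_iff_dvd, ← pow_mul_pow_sub p hv, mul_assoc,
    mul_dvd_mul_iff_left (pow_ne_zero v hp.ne_zero)]
  exact ⟨hp.pow_dvd_of_dvd_mul_left _ hc, (Dvd.dvd.mul_left · c)⟩

theorem mk_pow_mul_mk_eq_zero_iff (hp : Prime p) {v : ℕ} (hv : v ≤ s) (b : D) :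
    Ideal.Quotient.mk (Ideal.span {p ^ s}) (p ^ v) * Ideal.Quotient.mk _ b = 0 ↔
      p ^ (s - v) ∣ b := by
  simpa using mk_pow_mul_mul_mk_eq_zero_iff s hp hv hp.not_dvd_one b

theorem setOf_mk_pow_mul_mul_eq_zero (hp : Prime p) {v : ℕ} (hv : v ≤ s) {c : D}
    (hc : ¬p ∣ c) :
    {y | Ideal.Quotient.mk (Ideal.span {p ^ s}) (p ^ v * c) * y = 0} = powAnnihilator p s v := by
  ext y
  obtain ⟨b, rfl⟩ := Ideal.Quotient.mk_surjective y
  exact (mk_pow_mul_mul_mk_eq_zero_iff s hp hv hc b).trans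
    (mk_pow_mul_mk_eq_zero_iff s hp hv b).symm

theorem powAnnihilator_injOn (hp : Prime p) : Set.InjOn (powAnnihilator p s) (Set.Iic s) := by
  have le_of_subset : ∀ i j : ℕ, i ≤ s → j ≤ s →
      powAnnihilator p s i ⊆ powAnnihilator p s j → s - j ≤ s - i := by
    intro i j hi hj hsub
    have hmem : Ideal.Quotient.mk _ (p ^ (s - i)) ∈ powAnnihilator p s i :=
      (mk_pow_mul_mk_eq_zero_iff s hp hi _).2 dvd_rfl
    have := (mk_pow_mul_mk_eq_zero_iff s hp hj _).1 (hsub hmem)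
    exact (pow_dvd_pow_iff hp.ne_zero hp.not_isUnit).1 this
  intro i hi j hj hij
  have h₁ := le_of_subset i j hi hj hij.subset
  have h₂ := le_of_subset j i hj hi hij.superset
  simp only [Set.mem_Iic] at hi hj
  omega

theorem powAnnihilator_mem_annihilatorClasses (hp : Prime p) {k : ℕ} (hk : k ∈ Set.Ioo 0 s) :
    powAnnihilator p s k ∈ annihilatorClasses (D ⧸ Ideal.span {p ^ s}) := by
  have hpow : ∀ m n : ℕ, p ^ n ∣ p ^ m ↔ n ≤ m := fun _ _ ↦
    pow_dvd_pow_iff hp.ne_zero hp.not_isUnit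
  refine ⟨Ideal.Quotient.mk _ (p ^ k), ?_, ⟨Ideal.Quotient.mk _ (p ^ (s - k)), ?_, ?_⟩, rfl⟩
  · rw [Ne, Ideal.Quotient.eq_zero_iff_dvd, hpow]
    exact hk.2.not_ge
  · rw [Ne, Ideal.Quotient.eq_zero_iff_dvd, hpow]
    exact (Nat.sub_lt (hk.1.trans hk.2) hk.1).not_ge
  · exact (mk_pow_mul_mk_eq_zero_iff s hp hk.2.le _).2 dvd_rfl

theorem annihilatorClasses_eq_image [WfDvdMonoid D] (hp : Prime p) :
    annihilatorClasses (D ⧸ Ideal.span {p ^ s}) = powAnnihilator p s '' Set.Ioo 0 s := by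
  ext S
  constructor
  · rintro ⟨x, hx, ⟨w, hw, hxw⟩, rfl⟩
    obtain ⟨a, rfl⟩ := Ideal.Quotient.mk_surjective x
    obtain ⟨b, rfl⟩ := Ideal.Quotient.mk_surjective w
    rw [Ne, Ideal.Quotient.eq_zero_iff_dvd] at hx hw
    have ha : a ≠ 0 := by
      rintro rfl
      exact hx (dvd_zero _)
    obtain ⟨v, c, hc, rfl⟩ := WfDvdMonoid.max_power_factor ha hp.irreducible
    have hvs : v < s := by
      by_contra! hsv
      exact hx (dvd_mul_of_dvd_left (pow_dvd_pow p hsv) c)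
    rw [mk_pow_mul_mul_mk_eq_zero_iff s hp hvs.le hc] at hxw
    have hv : 0 < v := by
      by_contra! hv0
      rw [Nat.le_zero.1 hv0, Nat.sub_zero] at hxw
      exact hw hxw
    exact ⟨v, ⟨hv, hvs⟩, (setOf_mk_pow_mul_mul_eq_zero s hp hvs.le hc).symm⟩
  · rintro ⟨k, hk, rfl⟩
    exact powAnnihilator_mem_annihilatorClasses s hp hk

theorem natCard_annihilatorClasses [WfDvdMonoid D] (hp : Prime p) :
    Nat.card (annihilatorClasses (D ⧸ Ideal.span {p ^ s})) = s - 1 := by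
  rw [annihilatorClasses_eq_image s hp,
    Nat.card_image_of_injOn ((powAnnihilator_injOn s hp).mono fun _ hk ↦ hk.2.le)]
  simp

end PrimePowerQuotient

theorem stmt18 {D1 D2 : Type*} [CommRing D1] [IsDomain D1] [UniqueFactorizationMonoid D1]
    [CommRing D2] [IsDomain D2] [UniqueFactorizationMonoid D2]
    (p : D1) (hp : Irreducible p) (q : D2) (hq : Irreducible q)
    (s t : ℕ) (hs : 2 ≤ s) (ht : 2 ≤ t) (hst : s ≠ t) :
    ¬ Nonempty
      (({S : Set (D1 ⧸ Ideal.span {p ^ s}) | ∃ x : D1 ⧸ Ideal.span {p ^ s},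
          x ≠ 0 ∧ (∃ w : D1 ⧸ Ideal.span {p ^ s}, w ≠ 0 ∧ x * w = 0) ∧
          S = {y | x * y = 0}}) ≃
       ({S : Set (D2 ⧸ Ideal.span {q ^ t}) | ∃ x : D2 ⧸ Ideal.span {q ^ t},
          x ≠ 0 ∧ (∃ w : D2 ⧸ Ideal.span {q ^ t}, w ≠ 0 ∧ x * w = 0) ∧
          S = {y | x * y = 0}})) := by
  rintro ⟨e⟩
  have hcard : s - 1 = t - 1 := by
    rw [← PrimePowerQuotient.natCard_annihilatorClasses s hp.prime,
      ← PrimePowerQuotient.natCard_annihilatorClasses t hq.prime]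
    exact Nat.card_congr e
  omega
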